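/- In the agnostic XY-YX routing algorithm on the n×n alternating-direction grid, every packet injected at the gateway (0,0) destined for a node (x,y) with 0 ≤ x,y ≤ n-1 reaches its destination in at most x + y + 2 hops, and the route visits each node at most once. -/

import Mathlib

/-- The four cardinal unit moves on ℤ × ℤ. -/
inductive Dir
  | N | S | E | W
deriving DecidableEq

/-- Unit displacement vector of a move. -/
def Dir.vec : Dir → ℤ × ℤ
  | .N => (0, 1)
  | .S => (0, -1)
  | .E => (1, 0)
  | .W => (-1, 0)

/-- Agnostic XY-YX route from the gateway (0,0) to destination (x,y) on the
    alternating-direction grid: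
    even destination column: route East to column x, then North to row y;
    odd destination column, even row: East to column x-1 (even, northbound),
      North to row y, then one hop East;
    odd destination column, odd row: East to column x-1, North one row past the
      destination to row y+1 (even, eastbound), one hop East, one hop South. -/
def xyRoute (x y : ℕ) : List Dir :=
  if x % 2 = 0 then
    List.replicate x Dir.E ++ List.replicate y Dir.N
  else if y % 2 = 0 then
    List.replicate (x - 1) Dir.E ++ List.replicate y Dir.N ++ [Dir.E]
  else
    List.replicate (x - 1) Dir.E ++ List.replicate (y + 1) Dir.N ++ [Dir.E, Dir.S]

/-- The sequence of nodes visited, starting from the gateway (0,0). -/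
def routePositions (x y : ℕ) : List (ℤ × ℤ) :=
  (xyRoute x y).scanl (fun p d => p + d.vec) (0, 0)

private lemma scanl_repE (k : ℕ) (p : ℤ × ℤ) :
    List.scanl (fun p (d : Dir) => p + d.vec) p (List.replicate k Dir.E)
      = (List.range (k+1)).map (fun i : ℕ => (p.1 + (i : ℤ), p.2)) := by
  induction k generalizing p with
  | zero => simp [List.range_succ]
  | succ k ih =>
      rw [List.replicate_succ, List.scanl_cons]
      conv_rhs => rw [List.range_succ_eq_map]
      rw [ih]
      simp only [List.map_cons, List.map_map, Nat.cast_zero, add_zero]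
      congr 1
      apply List.map_congr_left
      intro i _
      simp only [Function.comp_apply, Dir.vec, Prod.fst_add, Prod.snd_add, Prod.mk.injEq]
      constructor
      · push_cast; ring
      · simp

private lemma scanl_repN (k : ℕ) (p : ℤ × ℤ) :
    List.scanl (fun p (d : Dir) => p + d.vec) p (List.replicate k Dir.N)
      = (List.range (k+1)).map (fun i : ℕ => (p.1, p.2 + (i : ℤ))) := by
  induction k generalizing p with
  | zero => simp [List.range_succ]
  | succ k ih =>
      rw [List.replicate_succ, List.scanl_cons]
      conv_rhs => rw [List.range_succ_eq_map]
      rw [ih]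
      simp only [List.map_cons, List.map_map, Nat.cast_zero, add_zero]
      congr 1
      apply List.map_congr_left
      intro i _
      simp only [Function.comp_apply, Dir.vec, Prod.fst_add, Prod.snd_add, Prod.mk.injEq]
      constructor
      · simp
      · push_cast; ring

private lemma scanl_app (f : (ℤ×ℤ) → Dir → ℤ×ℤ) :
    ∀ (l₁ l₂ : List Dir) (a : ℤ×ℤ),
      List.scanl f a (l₁ ++ l₂)
        = (List.scanl f a l₁).dropLast ++ List.scanl f (l₁.foldl f a) l₂
  | [], l₂, a => by simp
  | b :: l₁, l₂, a => by
      have hne : List.scanl f (f a b) l₁ ≠ [] := by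
        apply List.ne_nil_of_length_pos
        simp [List.length_scanl]
      rw [List.cons_append, List.scanl_cons, List.scanl_cons, scanl_app f l₁ l₂ (f a b),
        List.dropLast_cons_of_ne_nil hne, List.foldl_cons, List.cons_append]

private lemma foldl_repE (k : ℕ) (p : ℤ × ℤ) :
    List.foldl (fun p (d : Dir) => p + d.vec) p (List.replicate k Dir.E)
      = (p.1 + (k : ℤ), p.2) := by
  induction k generalizing p with
  | zero => simp
  | succ k ih =>
      rw [List.replicate_succ, List.foldl_cons, ih]
      simp only [Dir.vec, Prod.fst_add, Prod.snd_add, Prod.mk.injEq]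
      constructor
      · push_cast; ring
      · simp

private lemma foldl_repN (k : ℕ) (p : ℤ × ℤ) :
    List.foldl (fun p (d : Dir) => p + d.vec) p (List.replicate k Dir.N)
      = (p.1, p.2 + (k : ℤ)) := by
  induction k generalizing p with
  | zero => simp
  | succ k ih =>
      rw [List.replicate_succ, List.foldl_cons, ih]
      simp only [Dir.vec, Prod.fst_add, Prod.snd_add, Prod.mk.injEq]
      constructor
      · simp
      · push_cast; ring

private lemma nodup_horiz (m : ℕ) (c : ℤ) :
    ((List.range m).map (fun i : ℕ => ((i:ℤ), c))).Nodup :=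
  (List.nodup_range (n := m)).map (by intro a b h; simpa using congrArg Prod.fst h)

private lemma nodup_vert (m : ℕ) (c : ℤ) :
    ((List.range m).map (fun j : ℕ => (c, (j:ℤ)))).Nodup :=
  (List.nodup_range (n := m)).map (by intro a b h; simpa using congrArg Prod.snd h)

private lemma pos1 (x y : ℕ) (h2 : x % 2 = 0) :
    routePositions x y
      = (List.range x).map (fun i : ℕ => ((i:ℤ), (0:ℤ)))
        ++ (List.range (y+1)).map (fun j : ℕ => ((x:ℤ), (j:ℤ))) := by
  rw [routePositions, xyRoute, if_pos h2, scanl_app, scanl_repE, foldl_repE, scanl_repN]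
  congr 1
  · rw [List.range_succ, List.map_append, List.map_singleton, List.dropLast_concat]
    simp
  · simp

private lemma pos2 (x y : ℕ) (h1 : x % 2 = 1) (h0 : y % 2 = 0) :
    routePositions x y
      = (List.range (x-1)).map (fun i : ℕ => ((i:ℤ), (0:ℤ)))
        ++ ((List.range y).map (fun j : ℕ => (((x-1:ℕ):ℤ), (j:ℤ)))
        ++ [(((x-1:ℕ):ℤ), (y:ℤ)), (((x-1:ℕ):ℤ)+1, (y:ℤ))]) := by
  rw [routePositions, xyRoute, if_neg (by omega), if_pos h0, scanl_app, List.foldl_append,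
    scanl_app, scanl_repE, foldl_repE, scanl_repN, foldl_repN]
  rw [List.dropLast_append_of_ne_nil (by simp), List.append_assoc]
  congr 1
  · rw [List.range_succ, List.map_append, List.map_singleton, List.dropLast_concat]
    simp
  congr 1
  · rw [List.range_succ, List.map_append, List.map_singleton, List.dropLast_concat]
    simp
  · simp [List.scanl, Dir.vec, Prod.ext_iff]

private lemma pos3 (x y : ℕ) (h1 : x % 2 = 1) (h0 : y % 2 = 1) :
    routePositions x y
      = (List.range (x-1)).map (fun i : ℕ => ((i:ℤ), (0:ℤ)))
        ++ ((List.range (y+1)).map (fun j : ℕ => (((x-1:ℕ):ℤ), (j:ℤ)))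
        ++ [(((x-1:ℕ):ℤ), (y:ℤ)+1), (((x-1:ℕ):ℤ)+1, (y:ℤ)+1), (((x-1:ℕ):ℤ)+1, (y:ℤ))]) := by
  rw [routePositions, xyRoute, if_neg (by omega), if_neg (by omega), scanl_app,
    List.foldl_append, scanl_app, scanl_repE, foldl_repE, scanl_repN, foldl_repN]
  rw [List.dropLast_append_of_ne_nil (by simp), List.append_assoc]
  congr 1
  · rw [List.range_succ, List.map_append, List.map_singleton, List.dropLast_concat]
    simp
  congr 1
  · rw [List.range_succ, List.map_append, List.map_singleton, List.dropLast_concat]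
    simp
  · simp [List.scanl, Dir.vec, Prod.ext_iff]

/-- On the n×n alternating-direction grid (n ≥ 3), every packet injected at
    the gateway (0,0) destined for node (x,y) reaches its destination in at
    most x + y + 2 hops, and the route visits each node at most once. -/
theorem xyRoute_delivers (n x y : ℕ) (hn : 3 ≤ n) (hx : x < n) (hy : y < n) :
    (xyRoute x y).length ≤ x + y + 2 ∧
    (routePositions x y).Nodup ∧
    (routePositions x y).getLast? = some ((x : ℤ), (y : ℤ)) := by
  rcases Nat.even_or_odd x with hxe | hxo
  · have h2 : x % 2 = 0 := Nat.even_iff.mp hxe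
    refine ⟨?_, ?_, ?_⟩
    · simp [xyRoute, h2]
      try omega
    · rw [pos1 x y h2]
      refine List.Nodup.append (nodup_horiz x 0) (nodup_vert (y+1) x) ?_
      intro p hp hq
      simp only [List.mem_map, List.mem_range] at hp hq
      obtain ⟨i, hi, rfl⟩ := hp
      obtain ⟨j, hj, h⟩ := hq
      rw [Prod.mk.injEq] at h
      omega
    · rw [pos1 x y h2, List.getLast?_append]
      rw [show (y+1) = y + 1 from rfl, List.range_succ, List.map_append, List.map_singleton,
        List.getLast?_concat]
      rfl
  · have h1 : x % 2 = 1 := Nat.odd_iff.mp hxo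
    have hx1 : ((x-1:ℕ):ℤ) = (x:ℤ) - 1 := by omega
    rcases Nat.even_or_odd y with hye | hyo
    · have h0 : y % 2 = 0 := Nat.even_iff.mp hye
      refine ⟨?_, ?_, ?_⟩
      · simp [xyRoute, h1, h0]; omega
      · rw [pos2 x y h1 h0]
        refine List.Nodup.append (nodup_horiz (x-1) 0)
          (List.Nodup.append (nodup_vert y _) (by simp [Prod.mk.injEq]) ?_) ?_
        · intro p hp hq
          simp only [List.mem_map, List.mem_range] at hp
          obtain ⟨j, hj, rfl⟩ := hp
          simp only [List.mem_cons, List.mem_singleton, List.not_mem_nil, or_false] at hq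
          rcases hq with h | h <;> (rw [Prod.mk.injEq] at h; omega)
        · intro p hp hq
          simp only [List.mem_map, List.mem_range] at hp
          obtain ⟨i, hi, rfl⟩ := hp
          simp only [List.mem_append, List.mem_map, List.mem_range, List.mem_cons,
            List.mem_singleton, List.not_mem_nil, or_false] at hq
          rcases hq with ⟨j, hj, h⟩ | h | h <;> (rw [Prod.mk.injEq] at h; omega)
      · rw [pos2 x y h1 h0]
        have : (((x-1:ℕ):ℤ) + 1) = (x:ℤ) := by omega
        simp [List.getLast?_append, this]
    · have h0 : y % 2 = 1 := Nat.odd_iff.mp hyo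
      refine ⟨?_, ?_, ?_⟩
      · simp [xyRoute, h1, h0]; omega
      · rw [pos3 x y h1 h0]
        refine List.Nodup.append (nodup_horiz (x-1) 0)
          (List.Nodup.append (nodup_vert (y+1) _) (by simp [Prod.mk.injEq]) ?_) ?_
        · intro p hp hq
          simp only [List.mem_map, List.mem_range] at hp
          obtain ⟨j, hj, rfl⟩ := hp
          simp only [List.mem_cons, List.mem_singleton, List.not_mem_nil, or_false] at hq
          rcases hq with h | h | h <;> (rw [Prod.mk.injEq] at h; omega)
        · intro p hp hq
          simp only [List.mem_map, List.mem_range] at hp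
          obtain ⟨i, hi, rfl⟩ := hp
          simp only [List.mem_append, List.mem_map, List.mem_range, List.mem_cons,
            List.mem_singleton, List.not_mem_nil, or_false] at hq
          rcases hq with ⟨j, hj, h⟩ | h | h | h <;> (rw [Prod.mk.injEq] at h; omega)
      · rw [pos3 x y h1 h0]
        have : (((x-1:ℕ):ℤ) + 1) = (x:ℤ) := by omega
        simp [List.getLast?_append, this]
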